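/- arXiv:2503.17466 — 2 statements merged into one kernel-verified Lean document; each statement's English description precedes it below -/
import Mathlib

section
/- (Greenfield–Wallach characterization for Fourier multipliers.) Let n ≥ 1 and let p : ℤⁿ → ℂ be a symbol of order m for some m ∈ ℝ. Then p(D) is globally hypoelliptic (GH) if and only if: (i) the set {ξ ∈ ℤⁿ : p(ξ) = 0} is finite, and (ii) there exist constants K, L > 0 such that |p(ξ)| ≥ K·|ξ|^(−L) for all ξ ∈ ℤⁿ \ {0} with p(ξ) ≠ 0. -/
open scoped BigOperators

/-- `|ξ| = Σⱼ |ξⱼ|`. -/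
noncomputable def l1norm {n : ℕ} (ξ : Fin n → ℤ) : ℝ := ∑ j, |(ξ j : ℝ)|

/-- `‖ξ‖² = Σⱼ ξⱼ²`. -/
noncomputable def l2normSq {n : ℕ} (ξ : Fin n → ℤ) : ℝ := ∑ j, ((ξ j : ℝ)) ^ 2

/-- `u ∈ H^k(𝕋ⁿ)` in terms of its Fourier coefficients. -/
def InSobolev {n : ℕ} (k : ℝ) (u : (Fin n → ℤ) → ℂ) : Prop :=
  Summable fun ξ : Fin n → ℤ => (1 + l2normSq ξ) ^ k * ‖u ξ‖ ^ 2

/-- Polynomial growth of Fourier coefficients (a distribution on `𝕋ⁿ`). -/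
def PolyGrowth {n : ℕ} (u : (Fin n → ℤ) → ℂ) : Prop :=
  ∃ C N : ℝ, 0 < C ∧ 0 < N ∧
    ∀ ξ, ‖u ξ‖ ≤ C * (1 + Real.sqrt (l2normSq ξ)) ^ N

/-- Rapidly decreasing Fourier coefficients (a smooth function on `𝕋ⁿ`). -/
def RapidDecay {n : ℕ} (v : (Fin n → ℤ) → ℂ) : Prop :=
  ∀ N : ℝ, 0 < N → ∃ C : ℝ, 0 < C ∧
    ∀ ξ, ‖v ξ‖ ≤ C * (1 + Real.sqrt (l2normSq ξ)) ^ (-N)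

/-- `p` is a symbol of order `m`. -/
def SymbolOrder {n : ℕ} (m : ℝ) (p : (Fin n → ℤ) → ℂ) : Prop :=
  ∃ C : ℝ, 0 < C ∧ ∀ ξ, ‖p ξ‖ ≤ C * (1 + l2normSq ξ) ^ (m / 2)

/-- `p(D)` is globally hypoelliptic with loss of `r` derivatives (GH-`r`). -/
def GHr {n : ℕ} (m r : ℝ) (p : (Fin n → ℤ) → ℂ) : Prop :=
  ∀ (k : ℝ) (u : (Fin n → ℤ) → ℂ), PolyGrowth u →
    InSobolev k (fun ξ => p ξ * u ξ) → InSobolev (k + m - r) u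

/-- `p(D)` is globally solvable with loss of `r` derivatives (GS-`r`). -/
def GSr {n : ℕ} (m r : ℝ) (p : (Fin n → ℤ) → ℂ) : Prop :=
  ∀ (k : ℝ) (f : (Fin n → ℤ) → ℂ), InSobolev k f → (∀ ξ, p ξ = 0 → f ξ = 0) →
    ∃ u : (Fin n → ℤ) → ℂ, InSobolev (k + m - r) u ∧ ∀ ξ, p ξ * u ξ = f ξ

/-- `p(D)` is globally hypoelliptic (GH). -/
def GloballyHypoelliptic {n : ℕ} (p : (Fin n → ℤ) → ℂ) : Prop :=
  ∀ u : (Fin n → ℤ) → ℂ, PolyGrowth u →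
    RapidDecay (fun ξ => p ξ * u ξ) → RapidDecay u

/-!
If `p` has finitely many zeros and `|p(ξ)| ≥ K |ξ|^(-L)` elsewhere, then `u = (p u) / p` away
from a finite set, so dividing by `p` costs at most `L` powers of `⟨ξ⟩ = 1 + ‖ξ‖` and rapid
decay of `p u` passes to `u`. Conversely, test global hypoellipticity on indicators `u = 1_S`,
which have polynomial growth but decay rapidly only when `S` is finite: `S` = the zero set of `p`
gives (i), and if (ii) fails one finds points `ξₖ` with `|ξₖ| > k` and `|p(ξₖ)| < |ξₖ|^(-k-1)`,
whose range `S` is infinite while `p 1_S` decays rapidly.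
-/

open Filter Asymptotics Set Topology

noncomputable def japaneseBracket {n : ℕ} (ξ : Fin n → ℤ) : ℝ := 1 + Real.sqrt (l2normSq ξ)

def HasPolyLowerBound {n : ℕ} (p : (Fin n → ℤ) → ℂ) : Prop :=
  ∃ K L : ℝ, 0 < K ∧ 0 < L ∧ ∀ ξ : Fin n → ℤ, ξ ≠ 0 → p ξ ≠ 0 →
    K * l1norm ξ ^ (-L) ≤ ‖p ξ‖

section LatticeNorms

variable {n : ℕ} (ξ : Fin n → ℤ)

lemma japaneseBracket_pos : 0 < japaneseBracket ξ := by
  unfold japaneseBracket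
  positivity

lemma l1norm_nonneg : 0 ≤ l1norm ξ :=
  Finset.sum_nonneg fun _ _ => abs_nonneg _

lemma abs_apply_le_sqrt_l2normSq (j : Fin n) : |(ξ j : ℝ)| ≤ Real.sqrt (l2normSq ξ) := by
  unfold l2normSq
  rw [Real.le_sqrt (abs_nonneg _) (Finset.sum_nonneg fun _ _ => sq_nonneg _), sq_abs]
  exact Finset.single_le_sum (f := fun k => (ξ k : ℝ) ^ 2) (fun _ _ => sq_nonneg _)
    (Finset.mem_univ j)

lemma sqrt_l2normSq_le_l1norm : Real.sqrt (l2normSq ξ) ≤ l1norm ξ := by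
  refine Real.sqrt_le_iff.2 ⟨l1norm_nonneg ξ, ?_⟩
  simpa [l2normSq, l1norm, sq_abs] using
    Finset.sum_sq_le_sq_sum_of_nonneg (s := Finset.univ) (f := fun j => |(ξ j : ℝ)|)
      fun _ _ => abs_nonneg _

lemma l1norm_le_mul_japaneseBracket : l1norm ξ ≤ n * japaneseBracket ξ :=
  calc l1norm ξ ≤ ∑ _j : Fin n, japaneseBracket ξ :=
        Finset.sum_le_sum fun j _ => (abs_apply_le_sqrt_l2normSq ξ j).trans (by
          unfold japaneseBracket; linarith)
    _ = n * japaneseBracket ξ := by simp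

variable {ξ}

lemma one_le_l1norm (hξ : ξ ≠ 0) : 1 ≤ l1norm ξ := by
  obtain ⟨j, hj⟩ := Function.ne_iff.1 hξ
  have hj_abs : (1 : ℝ) ≤ |(ξ j : ℝ)| := by exact_mod_cast Int.one_le_abs hj
  exact hj_abs.trans (Finset.single_le_sum (f := fun k => |(ξ k : ℝ)|)
    (fun _ _ => abs_nonneg _) (Finset.mem_univ j))

lemma japaneseBracket_le_two_mul_l1norm (hξ : ξ ≠ 0) : japaneseBracket ξ ≤ 2 * l1norm ξ := by
  unfold japaneseBracket
  linarith [one_le_l1norm hξ, sqrt_l2normSq_le_l1norm ξ]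

lemma l1norm_rpow_neg_le {N : ℝ} (hξ : ξ ≠ 0) (hN : 0 ≤ N) :
    l1norm ξ ^ (-N) ≤ 2 ^ N * japaneseBracket ξ ^ (-N) :=
  calc l1norm ξ ^ (-N) = 2 ^ N * (2 * l1norm ξ) ^ (-N) := by
        rw [Real.mul_rpow zero_le_two (l1norm_nonneg ξ), ← mul_assoc, ← Real.rpow_add two_pos,
          add_neg_cancel, Real.rpow_zero, one_mul]
    _ ≤ 2 ^ N * japaneseBracket ξ ^ (-N) :=
        mul_le_mul_of_nonneg_left (Real.rpow_le_rpow_of_nonpos (japaneseBracket_pos ξ)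
          (japaneseBracket_le_two_mul_l1norm hξ) (neg_nonpos.2 hN)) (by positivity)

variable (n)

lemma tendsto_sqrt_l2normSq_cofinite_atTop :
    Tendsto (fun ξ : Fin n → ℤ => Real.sqrt (l2normSq ξ)) cofinite atTop := by
  refine tendsto_atTop_mono (fun ξ => ?_)
    (cocompact_eq_cofinite (Fin n → ℤ) ▸ tendsto_norm_cocompact_atTop)
  exact (pi_norm_le_iff_of_nonneg (Real.sqrt_nonneg _)).2 fun j =>
    (Int.norm_eq_abs _).trans_le (abs_apply_le_sqrt_l2normSq ξ j)

lemma tendsto_l1norm_cofinite_atTop : Tendsto (l1norm (n := n)) cofinite atTop :=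
  tendsto_atTop_mono sqrt_l2normSq_le_l1norm (tendsto_sqrt_l2normSq_cofinite_atTop n)

lemma tendsto_japaneseBracket_cofinite_atTop :
    Tendsto (japaneseBracket (n := n)) cofinite atTop :=
  tendsto_atTop_mono (fun _ => le_add_of_nonneg_left zero_le_one)
    (tendsto_sqrt_l2normSq_cofinite_atTop n)

end LatticeNorms

section RapidDecay

variable {n : ℕ}

lemma rapidDecay_iff_isBigO {v : (Fin n → ℤ) → ℂ} :
    RapidDecay v ↔ ∀ N : ℝ, 0 < N → v =O[cofinite] fun ξ => japaneseBracket ξ ^ (-N) := by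
  have hpos : ∀ (N : ℝ) (ξ : Fin n → ℤ), 0 < japaneseBracket ξ ^ (-N) := fun N ξ =>
    Real.rpow_pos_of_pos (japaneseBracket_pos ξ) _
  refine forall₂_congr fun N _ => ?_
  rw [isBigO_cofinite_iff fun ξ h => absurd h (hpos N ξ).ne']
  simp only [Real.norm_of_nonneg (hpos N _).le]
  constructor
  · rintro ⟨C, -, hC⟩
    exact ⟨C, hC⟩
  · rintro ⟨C, hC⟩
    exact ⟨max C 1, by positivity, fun ξ =>
      (hC ξ).trans (mul_le_mul_of_nonneg_right (le_max_left _ _) (hpos N ξ).le)⟩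

lemma RapidDecay.finite_setOf_one_le_norm {v : (Fin n → ℤ) → ℂ} (hv : RapidDecay v) :
    {ξ | 1 ≤ ‖v ξ‖}.Finite := by
  have hlim : Tendsto v cofinite (𝓝 0) :=
    (rapidDecay_iff_isBigO.1 hv 1 one_pos).trans_tendsto
      ((tendsto_rpow_neg_atTop one_pos).comp (tendsto_japaneseBracket_cofinite_atTop n))
  simpa using eventually_cofinite.1
    ((tendsto_zero_iff_norm_tendsto_zero.1 hlim).eventually (gt_mem_nhds one_pos))

lemma rapidDecay_indicator_range {v : (Fin n → ℤ) → ℂ} {ξs : ℕ → Fin n → ℤ}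
    (hξs : ∀ k, ξs k ≠ 0) (hv : ∀ k : ℕ, ‖v (ξs k)‖ ≤ l1norm (ξs k) ^ (-(k : ℝ))) :
    RapidDecay ((range ξs).indicator v) := by
  refine rapidDecay_iff_isBigO.2 fun N hN => IsBigO.of_bound (2 ^ N) ?_
  have hfar : ∀ k : ℕ, N ≤ k → ‖v (ξs k)‖ ≤ 2 ^ N * japaneseBracket (ξs k) ^ (-N) :=
    fun k hk => calc
      ‖v (ξs k)‖ ≤ l1norm (ξs k) ^ (-(k : ℝ)) := hv k
      _ ≤ l1norm (ξs k) ^ (-N) :=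
          Real.rpow_le_rpow_of_exponent_le (one_le_l1norm (hξs k)) (neg_le_neg hk)
      _ ≤ 2 ^ N * japaneseBracket (ξs k) ^ (-N) := l1norm_rpow_neg_le (hξs k) hN.le
  refine eventually_cofinite.2 (((finite_lt_nat ⌈N⌉₊).image ξs).subset fun ξ hξ => ?_)
  have hpos : 0 < japaneseBracket ξ ^ (-N) := Real.rpow_pos_of_pos (japaneseBracket_pos ξ) _
  rw [mem_ofPred_eq, Real.norm_of_nonneg hpos.le] at hξ
  by_cases hrange : ξ ∈ range ξs
  · obtain ⟨k, rfl⟩ := hrange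
    refine ⟨k, ?_, rfl⟩
    by_contra hk
    rw [indicator_of_mem (mem_range_self k)] at hξ
    exact hξ (hfar k ((Nat.le_ceil N).trans (by exact_mod_cast not_lt.1 hk)))
  · rw [indicator_of_notMem hrange, norm_zero] at hξ
    exact absurd (by positivity) hξ

end RapidDecay

lemma exists_pos_forall_mul_le_of_finite {α : Type*} {A : Set α} {f g : α → ℝ}
    (hf : ∀ x ∈ A, 0 < f x) (hg : ∀ x ∈ A, 0 < g x) (hfin : {x ∈ A | f x < g x}.Finite) :
    ∃ K > 0, ∀ x ∈ A, K * g x ≤ f x := by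
  rcases eq_empty_or_nonempty {x ∈ A | f x < g x} with hempty | hne
  · refine ⟨1, one_pos, fun x hx => ?_⟩
    have hx' : x ∉ {x ∈ A | f x < g x} := hempty ▸ notMem_empty x
    simpa [hx] using hx'
  · obtain ⟨x₀, ⟨hx₀A, hx₀⟩, hmin⟩ := exists_min_image _ (fun x => f x / g x) hfin hne
    have hK1 : f x₀ / g x₀ < 1 := (div_lt_one (hg x₀ hx₀A)).2 hx₀
    refine ⟨f x₀ / g x₀, div_pos (hf x₀ hx₀A) (hg x₀ hx₀A), fun x hx => ?_⟩
    by_cases hxlt : f x < g x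
    · exact (le_div_iff₀ (hg x hx)).1 (hmin x ⟨hx, hxlt⟩)
    · nlinarith [hg x hx]

section Hypoellipticity

variable {n : ℕ} {p : (Fin n → ℤ) → ℂ}

lemma GloballyHypoelliptic.finite_of_rapidDecay_indicator (hp : GloballyHypoelliptic p)
    {S : Set (Fin n → ℤ)} (hS : RapidDecay (S.indicator p)) : S.Finite := by
  have hgrowth : PolyGrowth (S.indicator 1) := by
    refine ⟨1, 1, one_pos, one_pos, fun ξ => ?_⟩
    have hle : ‖S.indicator (1 : (Fin n → ℤ) → ℂ) ξ‖ ≤ 1 := by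
      by_cases h : ξ ∈ S <;> simp [h]
    rw [Real.rpow_one, one_mul]
    linarith [Real.sqrt_nonneg (l2normSq ξ)]
  have hdecay : RapidDecay fun ξ => p ξ * S.indicator 1 ξ := by
    simpa only [← indicator_mul_right, Pi.one_apply, mul_one] using hS
  refine (hp _ hgrowth hdecay).finite_setOf_one_le_norm.subset fun ξ hξ => ?_
  simp [hξ]

lemma GloballyHypoelliptic.finite_setOf_eq_zero (hp : GloballyHypoelliptic p) :
    {ξ | p ξ = 0}.Finite := by
  refine hp.finite_of_rapidDecay_indicator fun N _ => ⟨1, one_pos, fun ξ => ?_⟩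
  rw [show {ξ | p ξ = 0}.indicator p ξ = 0 from indicator_apply_eq_zero.2 id, norm_zero]
  exact mul_nonneg zero_le_one (Real.rpow_nonneg (japaneseBracket_pos ξ).le _)

lemma infinite_setOf_norm_lt_of_not_hasPolyLowerBound (hp : ¬HasPolyLowerBound p) {L : ℝ}
    (hL : 0 < L) : {ξ | (ξ ≠ 0 ∧ p ξ ≠ 0) ∧ ‖p ξ‖ < l1norm ξ ^ (-L)}.Infinite := fun hfin => by
  obtain ⟨K, hK, hKle⟩ := exists_pos_forall_mul_le_of_finite (A := {ξ | ξ ≠ 0 ∧ p ξ ≠ 0})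
    (fun ξ hξ => norm_pos_iff.2 hξ.2)
    (fun ξ hξ => Real.rpow_pos_of_pos (zero_lt_one.trans_le (one_le_l1norm hξ.1)) _) hfin
  exact hp ⟨K, L, hK, hL, fun ξ h0 hp0 => hKle ξ ⟨h0, hp0⟩⟩

lemma GloballyHypoelliptic.hasPolyLowerBound (hp : GloballyHypoelliptic p) :
    HasPolyLowerBound p := by
  by_contra hbound
  have hpoints : ∀ k : ℕ, ∃ ξ, ((ξ ≠ 0 ∧ p ξ ≠ 0) ∧ ‖p ξ‖ < l1norm ξ ^ (-(k + 1 : ℝ))) ∧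
      (k : ℝ) < l1norm ξ := fun k => by
    obtain ⟨ξ, hsmall, hlarge⟩ :=
      ((infinite_setOf_norm_lt_of_not_hasPolyLowerBound hbound k.cast_add_one_pos).sdiff
        (eventually_cofinite.1
          ((tendsto_l1norm_cofinite_atTop n).eventually_gt_atTop (k : ℝ)))).nonempty
    exact ⟨ξ, hsmall, not_not.1 hlarge⟩
  choose ξs hsmall hlarge using hpoints
  have hdecay : RapidDecay ((range ξs).indicator p) :=
    rapidDecay_indicator_range (fun k => (hsmall k).1.1) fun k =>
      (hsmall k).2.le.trans
        (Real.rpow_le_rpow_of_exponent_le (one_le_l1norm (hsmall k).1.1) (by linarith))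
  have hunbounded : ¬BddAbove (l1norm '' range ξs) := by
    rintro ⟨b, hb⟩
    obtain ⟨k, hk⟩ := exists_nat_gt b
    linarith [hb ⟨ξs k, mem_range_self k, rfl⟩, hlarge k]
  exact (infinite_of_not_bddAbove hunbounded).of_image l1norm
    (hp.finite_of_rapidDecay_indicator hdecay)

lemma isBigO_inv_japaneseBracket_rpow {K L : ℝ} (hK : 0 < K) (hL : 0 ≤ L)
    (hfin : {ξ | p ξ = 0}.Finite)
    (hlow : ∀ ξ : Fin n → ℤ, ξ ≠ 0 → p ξ ≠ 0 → K * l1norm ξ ^ (-L) ≤ ‖p ξ‖) :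
    (fun ξ => (p ξ)⁻¹) =O[cofinite] fun ξ => japaneseBracket ξ ^ L := by
  refine IsBigO.of_bound (K⁻¹ * n ^ L) ?_
  filter_upwards [((finite_singleton 0).union hfin).eventually_cofinite_notMem] with ξ hξ
  have h0 : ξ ≠ 0 := fun h => hξ (Or.inl h)
  have hp0 : p ξ ≠ 0 := fun h => hξ (Or.inr h)
  have hl1 : 0 < l1norm ξ := zero_lt_one.trans_le (one_le_l1norm h0)
  have hbracket := japaneseBracket_pos ξ
  rw [norm_inv, Real.norm_of_nonneg (Real.rpow_nonneg hbracket.le _)]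
  calc ‖p ξ‖⁻¹ ≤ (K * l1norm ξ ^ (-L))⁻¹ :=
        inv_anti₀ (mul_pos hK (Real.rpow_pos_of_pos hl1 _)) (hlow ξ h0 hp0)
    _ = K⁻¹ * l1norm ξ ^ L := by rw [mul_inv, Real.rpow_neg hl1.le, inv_inv]
    _ ≤ K⁻¹ * (n * japaneseBracket ξ) ^ L := by
        gcongr
        exact l1norm_le_mul_japaneseBracket ξ
    _ = K⁻¹ * n ^ L * japaneseBracket ξ ^ L := by
        rw [Real.mul_rpow (Nat.cast_nonneg n) hbracket.le, mul_assoc]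

lemma globallyHypoelliptic_of_finite_of_hasPolyLowerBound (hfin : {ξ | p ξ = 0}.Finite)
    (hlow : HasPolyLowerBound p) : GloballyHypoelliptic p := by
  obtain ⟨K, L, hK, hL, hbound⟩ := hlow
  intro u _ hpu
  refine rapidDecay_iff_isBigO.2 fun N hN => ?_
  have hquot := (rapidDecay_iff_isBigO.1 hpu (N + L) (by linarith)).mul
    (isBigO_inv_japaneseBracket_rpow hK hL.le hfin hbound)
  refine hquot.congr' ?_ (Eventually.of_forall fun ξ => ?_)
  · filter_upwards [hfin.eventually_cofinite_notMem] with ξ hξ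
    field_simp [show p ξ ≠ 0 from hξ]
  · dsimp only
    rw [← Real.rpow_add (japaneseBracket_pos ξ)]
    ring_nf

end Hypoellipticity

theorem stmt_3_general {n : ℕ} (p : (Fin n → ℤ) → ℂ) :
    GloballyHypoelliptic p ↔
      ({ξ : Fin n → ℤ | p ξ = 0}.Finite ∧
        ∃ K L : ℝ, 0 < K ∧ 0 < L ∧ ∀ ξ : Fin n → ℤ, ξ ≠ 0 → p ξ ≠ 0 →
          K * l1norm ξ ^ (-L) ≤ ‖p ξ‖) :=
  ⟨fun hp => ⟨hp.finite_setOf_eq_zero, hp.hasPolyLowerBound⟩,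
    fun ⟨hfin, hlow⟩ => globallyHypoelliptic_of_finite_of_hasPolyLowerBound hfin hlow⟩

theorem stmt_3 {n : ℕ} (hn : 1 ≤ n) (m : ℝ)
    (p : (Fin n → ℤ) → ℂ) (hp : SymbolOrder m p) :
    GloballyHypoelliptic p ↔
      ({ξ : Fin n → ℤ | p ξ = 0}.Finite ∧
        ∃ K L : ℝ, 0 < K ∧ 0 < L ∧ ∀ ξ : Fin n → ℤ, ξ ≠ 0 → p ξ ≠ 0 →
          K * l1norm ξ ^ (-L) ≤ ‖p ξ‖) :=
  stmt_3_general p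
end

section
/- Let n ≥ 1 and let p : ℤⁿ → ℂ be a symbol of order m for some m ∈ ℝ. Then p(D) is globally hypoelliptic (GH) if and only if there exists r ≥ 0 such that p(D) is GH-r. -/
open scoped BigOperators

/-!
Write `⟨ξ⟩² = 1 + ‖ξ‖²`. The operator `p(D)` is globally hypoelliptic exactly when `p` is bounded
below by a power `⟨ξ⟩^(-2μ)` outside a finite set. If it is not, there are `ξⱼ → ∞` with
`|p(ξⱼ)| < ⟨ξⱼ⟩^(-2j)`; the indicator `u` of `{ξⱼ}` is not rapidly decreasing, but `p · u` is.
Conversely the lower bound gives `|u| ≤ ⟨ξ⟩^(2μ) |p u|` off a finite set, which is GH-`r` for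
every `r ≥ m + 2μ`. Finally GH-`r` implies GH because the rapidly decreasing sequences are
exactly `⋂ₖ Hᵏ`.
-/

open Filter Asymptotics

section Weight

variable {n : ℕ}

lemma l2normSq_nonneg (ξ : Fin n → ℤ) : 0 ≤ l2normSq ξ :=
  Finset.sum_nonneg fun _ _ => sq_nonneg _

lemma sq_le_l2normSq (ξ : Fin n → ℤ) (j : Fin n) : (ξ j : ℝ) ^ 2 ≤ l2normSq ξ :=
  Finset.single_le_sum (f := fun i => (ξ i : ℝ) ^ 2) (fun _ _ => sq_nonneg _) (Finset.mem_univ j)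

lemma one_le_one_add_l2normSq (ξ : Fin n → ℤ) : 1 ≤ 1 + l2normSq ξ :=
  le_add_of_nonneg_right (l2normSq_nonneg ξ)

lemma one_add_l2normSq_pos (ξ : Fin n → ℤ) : 0 < 1 + l2normSq ξ :=
  zero_lt_one.trans_le (one_le_one_add_l2normSq ξ)

lemma one_add_l2normSq_rpow_pos (ξ : Fin n → ℤ) (s : ℝ) : 0 < (1 + l2normSq ξ) ^ s :=
  Real.rpow_pos_of_pos (one_add_l2normSq_pos ξ) s

lemma one_add_l2normSq_le_sq (ξ : Fin n → ℤ) :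
    1 + l2normSq ξ ≤ (1 + √(l2normSq ξ)) ^ 2 := by
  nlinarith [Real.sq_sqrt (l2normSq_nonneg ξ), Real.sqrt_nonneg (l2normSq ξ)]

lemma one_add_sqrt_l2normSq_le (ξ : Fin n → ℤ) :
    1 + √(l2normSq ξ) ≤ 2 * (1 + l2normSq ξ) := by
  nlinarith [Real.sq_sqrt (l2normSq_nonneg ξ), Real.sqrt_nonneg (l2normSq ξ)]

lemma finite_setOf_l2normSq_le (B : ℝ) : {ξ : Fin n → ℤ | l2normSq ξ ≤ B}.Finite := by
  refine (Set.Finite.pi fun _ => Set.finite_Icc (-⌈B⌉) ⌈B⌉).subset fun ξ hξ j _ => ?_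
  have hsq : ξ j ^ 2 ≤ ⌈B⌉ := by
    exact_mod_cast (sq_le_l2normSq ξ j).trans (hξ.trans (Int.le_ceil B))
  have := Int.le_self_sq (ξ j)
  have := Int.le_self_sq (-ξ j)
  constructor <;> nlinarith

lemma one_add_l2normSq_rpow_neg_le {N : ℝ} (hN : 0 ≤ N) (ξ : Fin n → ℤ) :
    (1 + l2normSq ξ) ^ (-N) ≤ 2 ^ N * (1 + √(l2normSq ξ)) ^ (-N) := by
  rw [Real.rpow_neg (one_add_l2normSq_pos ξ).le, Real.rpow_neg (by positivity), ← div_eq_mul_inv,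
    le_div_iff₀ (by positivity), inv_mul_le_iff₀ (one_add_l2normSq_rpow_pos ξ N),
    ← Real.mul_rpow (one_add_l2normSq_pos ξ).le zero_le_two]
  exact Real.rpow_le_rpow (by positivity) ((one_add_sqrt_l2normSq_le ξ).trans_eq (mul_comm _ _)) hN

lemma one_add_sqrt_l2normSq_rpow_le {N : ℝ} (hN : 0 ≤ N) (ξ : Fin n → ℤ) :
    (1 + √(l2normSq ξ)) ^ (-(2 * N)) ≤ (1 + l2normSq ξ) ^ (-N) := by
  rw [show -(2 * N) = 2 * -N by ring, Real.rpow_mul (by positivity), Real.rpow_two]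
  exact Real.rpow_le_rpow_of_nonpos (one_add_l2normSq_pos ξ) (one_add_l2normSq_le_sq ξ)
    (neg_nonpos.2 hN)

end Weight

section RapidDecay

variable {n : ℕ}

lemma RapidDecay.exists_norm_le {v : (Fin n → ℤ) → ℂ} (hv : RapidDecay v) {N : ℝ} (hN : 0 < N) :
    ∃ C : ℝ, 0 < C ∧ ∀ ξ, ‖v ξ‖ ≤ C * (1 + l2normSq ξ) ^ (-N) := by
  obtain ⟨C, hC, hv⟩ := hv (2 * N) (by positivity)
  exact ⟨C, hC, fun ξ => (hv ξ).trans
    (mul_le_mul_of_nonneg_left (one_add_sqrt_l2normSq_rpow_le hN.le ξ) hC.le)⟩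

lemma rapidDecay_of_eventually_norm_le {v : (Fin n → ℤ) → ℂ}
    (hv : ∀ N : ℝ, 0 < N → ∀ᶠ ξ in cofinite, ‖v ξ‖ ≤ (1 + l2normSq ξ) ^ (-N)) :
    RapidDecay v := by
  intro N hN
  have hO : v =O[cofinite] fun ξ => (1 + √(l2normSq ξ)) ^ (-N) := by
    refine IsBigO.of_bound (2 ^ N) ((hv N hN).mono fun ξ hξ => ?_)
    rw [Real.norm_of_nonneg (by positivity)]
    exact hξ.trans (one_add_l2normSq_rpow_neg_le hN.le ξ)
  obtain ⟨C, hC, hbound⟩ := bound_of_isBigO_cofinite hO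
  refine ⟨C, hC, fun ξ => ?_⟩
  have hpos : 0 < (1 + √(l2normSq ξ)) ^ (-N) := by positivity
  simpa only [Real.norm_of_nonneg hpos.le] using hbound hpos.ne'

lemma polyGrowth_of_norm_le_one {u : (Fin n → ℤ) → ℂ} (hu : ∀ ξ, ‖u ξ‖ ≤ 1) : PolyGrowth u :=
  ⟨1, 1, one_pos, one_pos, fun ξ => by
    rw [one_mul, Real.rpow_one]
    exact (hu ξ).trans (le_add_of_nonneg_right (Real.sqrt_nonneg _))⟩

end RapidDecay

lemma summable_prod_apply_of_nonneg {α : Type*} {g : α → ℝ} (hg : Summable g) (hg0 : 0 ≤ g) :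
    ∀ n : ℕ, Summable fun x : Fin n → α => ∏ i, g (x i)
  | 0 => .of_finite
  | n + 1 => by
    rw [← (Fin.consEquiv fun _ : Fin (n + 1) => α).summable_iff]
    refine (hg.mul_of_nonneg (summable_prod_apply_of_nonneg hg hg0 n) hg0
      fun _ => Finset.prod_nonneg fun _ _ => hg0 _).congr fun x => ?_
    simp [Fin.consEquiv, Fin.prod_univ_succ]

lemma summable_inv_one_add_sq_int : Summable fun k : ℤ => (1 + (k : ℝ) ^ 2)⁻¹ := by
  refine (Real.summable_one_div_int_pow.mpr one_lt_two).of_norm_bounded_eventually ?_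
  filter_upwards [eventually_cofinite_ne 0] with k hk
  rw [Real.norm_of_nonneg (by positivity), one_div]
  exact inv_anti₀ (pow_pos (abs_pos.2 (Int.cast_ne_zero.2 hk)) 2 |>.trans_eq (sq_abs _))
    (le_add_of_nonneg_left zero_le_one)

lemma summable_one_add_l2normSq_rpow_neg {n : ℕ} {s : ℝ} (hs : n ≤ s) :
    Summable fun ξ : Fin n → ℤ => (1 + l2normSq ξ) ^ (-s) := by
  refine Summable.of_nonneg_of_le (fun ξ => (one_add_l2normSq_rpow_pos ξ _).le)
    (fun ξ => ?_) (summable_prod_apply_of_nonneg summable_inv_one_add_sq_int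
      (fun k => by positivity) n)
  have hprod : ∏ j, (1 + (ξ j : ℝ) ^ 2) ≤ (1 + l2normSq ξ) ^ n := by
    calc ∏ j, (1 + (ξ j : ℝ) ^ 2) ≤ ∏ _j : Fin n, (1 + l2normSq ξ) :=
          Finset.prod_le_prod (fun j _ => by positivity) fun j _ => by linarith [sq_le_l2normSq ξ j]
      _ = (1 + l2normSq ξ) ^ n := by simp
  calc (1 + l2normSq ξ) ^ (-s) ≤ (1 + l2normSq ξ) ^ (-(n : ℝ)) :=
        Real.rpow_le_rpow_of_exponent_le (one_le_one_add_l2normSq ξ) (neg_le_neg hs)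
    _ = ((1 + l2normSq ξ) ^ n)⁻¹ := by
        rw [Real.rpow_neg (one_add_l2normSq_pos ξ).le, Real.rpow_natCast]
    _ ≤ ∏ j, (1 + (ξ j : ℝ) ^ 2)⁻¹ := by
        rw [Finset.prod_inv_distrib]
        exact inv_anti₀ (Finset.prod_pos fun j _ => by positivity) hprod

section Sobolev

variable {n : ℕ}

lemma RapidDecay.inSobolev {v : (Fin n → ℤ) → ℂ} (hv : RapidDecay v) (k : ℝ) : InSobolev k v := by
  obtain ⟨C, -, hC⟩ := hv.exists_norm_le (N := |k| + n + 1) (by positivity)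
  refine Summable.of_nonneg_of_le
    (fun ξ => mul_nonneg (one_add_l2normSq_rpow_pos ξ k).le (sq_nonneg _)) (fun ξ => ?_)
    ((summable_one_add_l2normSq_rpow_neg le_rfl).mul_left (C ^ 2))
  have hw := one_add_l2normSq_pos ξ
  calc (1 + l2normSq ξ) ^ k * ‖v ξ‖ ^ 2
      ≤ (1 + l2normSq ξ) ^ k * (C * (1 + l2normSq ξ) ^ (-(|k| + n + 1))) ^ 2 := by
        gcongr
        exact hC ξ
    _ = C ^ 2 * (1 + l2normSq ξ) ^ (k + -(|k| + n + 1) + -(|k| + n + 1)) := by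
        rw [Real.rpow_add hw, Real.rpow_add hw]; ring
    _ ≤ C ^ 2 * (1 + l2normSq ξ) ^ (-(n : ℝ)) := by
        gcongr
        · exact one_le_one_add_l2normSq ξ
        · linarith [le_abs_self k, abs_nonneg k, Nat.cast_nonneg (α := ℝ) n]

lemma rapidDecay_of_forall_inSobolev {u : (Fin n → ℤ) → ℂ} (hu : ∀ k, InSobolev k u) :
    RapidDecay u := by
  refine rapidDecay_of_eventually_norm_le fun N _ => ?_
  filter_upwards [(hu (2 * N)).tendsto_cofinite_zero.eventually (ge_mem_nhds one_pos)] with ξ hξ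
  have hwN := one_add_l2normSq_rpow_pos ξ N
  have hsq : ((1 + l2normSq ξ) ^ N * ‖u ξ‖) ^ 2 ≤ 1 := by
    rwa [mul_pow, ← Real.rpow_mul_natCast (one_add_l2normSq_pos ξ).le, Nat.cast_ofNat, mul_comm N]
  rw [Real.rpow_neg (one_add_l2normSq_pos ξ).le, ← one_div, le_div_iff₀ hwN, mul_comm]
  exact (pow_le_one_iff_of_nonneg (by positivity) two_ne_zero).1 hsq

lemma rapidDecay_iff_forall_inSobolev {u : (Fin n → ℤ) → ℂ} :
    RapidDecay u ↔ ∀ k, InSobolev k u :=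
  ⟨RapidDecay.inSobolev, rapidDecay_of_forall_inSobolev⟩

end Sobolev

section Hypoellipticity

variable {n : ℕ} {p : (Fin n → ℤ) → ℂ}

lemma GHr.globallyHypoelliptic {m r : ℝ} (h : GHr m r p) : GloballyHypoelliptic p := by
  intro u hu hpu
  rw [rapidDecay_iff_forall_inSobolev] at hpu ⊢
  intro k
  have := h (k - m + r) u hu (hpu _)
  rwa [show k - m + r + m - r = k by ring] at this

lemma GHr.of_eventually_rpow_neg_le {m r μ : ℝ}
    (hp : ∀ᶠ ξ in cofinite, (1 + l2normSq ξ) ^ (-μ) ≤ ‖p ξ‖) (hr : m + 2 * μ ≤ r) :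
    GHr m r p := by
  intro k u _ hpu
  refine hpu.of_norm_bounded_eventually ?_
  filter_upwards [hp] with ξ hξ
  have hw := one_add_l2normSq_pos ξ
  rw [Real.norm_of_nonneg (mul_nonneg (one_add_l2normSq_rpow_pos ξ _).le (sq_nonneg _))]
  calc (1 + l2normSq ξ) ^ (k + m - r) * ‖u ξ‖ ^ 2
      ≤ (1 + l2normSq ξ) ^ (k + -μ + -μ) * ‖u ξ‖ ^ 2 := by
        gcongr
        · exact one_le_one_add_l2normSq ξ
        · linarith
    _ = (1 + l2normSq ξ) ^ k * (((1 + l2normSq ξ) ^ (-μ)) ^ 2 * ‖u ξ‖ ^ 2) := by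
        rw [Real.rpow_add hw, Real.rpow_add hw]; ring
    _ ≤ (1 + l2normSq ξ) ^ k * (‖p ξ‖ ^ 2 * ‖u ξ‖ ^ 2) := by
        gcongr
    _ = (1 + l2normSq ξ) ^ k * ‖p ξ * u ξ‖ ^ 2 := by rw [norm_mul, mul_pow]

lemma rapidDecay_mul_indicator_range {ζ : ℕ → Fin n → ℤ}
    (hζ : ∀ j : ℕ, ‖p (ζ j)‖ ≤ (1 + l2normSq (ζ j)) ^ (-(j : ℝ))) :
    RapidDecay fun ξ => p ξ * (Set.range ζ).indicator 1 ξ := by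
  refine rapidDecay_of_eventually_norm_le fun N _ => ?_
  refine eventually_cofinite.2 (((Set.finite_Iio ⌈N⌉₊).image ζ).subset fun ξ hξ => ?_)
  have hξ : _ < _ := not_le.1 hξ
  obtain ⟨j, rfl⟩ : ξ ∈ Set.range ζ := by
    by_contra hmem
    rw [Set.indicator_of_notMem hmem, mul_zero, norm_zero] at hξ
    exact hξ.not_gt (one_add_l2normSq_rpow_pos ξ _)
  refine ⟨j, Nat.lt_ceil.2 ?_, rfl⟩
  rw [Set.indicator_of_mem (Set.mem_range_self j), Pi.one_apply, mul_one] at hξ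
  by_contra! hj
  exact hξ.not_ge ((hζ j).trans
    (Real.rpow_le_rpow_of_exponent_le (one_le_one_add_l2normSq _) (neg_le_neg hj)))

lemma not_rapidDecay_indicator_range {ζ : ℕ → Fin n → ℤ}
    (hζ : ∀ j : ℕ, (j : ℝ) ≤ l2normSq (ζ j)) :
    ¬RapidDecay ((Set.range ζ).indicator (1 : (Fin n → ℤ) → ℂ)) := by
  intro h
  obtain ⟨C, -, hC⟩ := h.exists_norm_le one_pos
  have hj := hC (ζ ⌈C⌉₊)
  rw [Set.indicator_of_mem (Set.mem_range_self _), Pi.one_apply, norm_one, Real.rpow_neg_one,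
    ← div_eq_mul_inv, le_div_iff₀ (one_add_l2normSq_pos _), one_mul] at hj
  linarith [Nat.le_ceil C, hζ ⌈C⌉₊]

lemma GloballyHypoelliptic.exists_eventually_rpow_neg_le (hp : GloballyHypoelliptic p) :
    ∃ μ : ℝ, ∀ᶠ ξ in cofinite, (1 + l2normSq ξ) ^ (-μ) ≤ ‖p ξ‖ := by
  by_contra! h
  have hbad (j : ℕ) :
      ∃ ξ, (j : ℝ) ≤ l2normSq ξ ∧ ‖p ξ‖ ≤ (1 + l2normSq ξ) ^ (-(j : ℝ)) :=
    ((h j).and_eventually (finite_setOf_l2normSq_le j).eventually_cofinite_notMem).exists.imp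
      fun _ ⟨hsmall, hlarge⟩ => ⟨(not_le.1 hlarge).le, hsmall.le⟩
  choose ζ hζ_large hζ_small using hbad
  refine not_rapidDecay_indicator_range hζ_large (hp _ ?_ (rapidDecay_mul_indicator_range hζ_small))
  exact polyGrowth_of_norm_le_one fun ξ => (norm_indicator_le_norm_self _ ξ).trans_eq norm_one

end Hypoellipticity

theorem stmt_4_general {n : ℕ} (m : ℝ)
    (p : (Fin n → ℤ) → ℂ) :
    GloballyHypoelliptic p ↔ ∃ r : ℝ, 0 ≤ r ∧ GHr m r p := by
  refine ⟨fun hp => ?_, fun ⟨r, _, hr⟩ => hr.globallyHypoelliptic⟩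
  obtain ⟨μ, hμ⟩ := hp.exists_eventually_rpow_neg_le
  exact ⟨max (m + 2 * μ) 0, le_max_right _ _, .of_eventually_rpow_neg_le hμ (le_max_left _ _)⟩

theorem stmt_4 {n : ℕ} (hn : 1 ≤ n) (m : ℝ)
    (p : (Fin n → ℤ) → ℂ) (hp : SymbolOrder m p) :
    GloballyHypoelliptic p ↔ ∃ r : ℝ, 0 ≤ r ∧ GHr m r p :=
  stmt_4_general m p
end
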